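/- Suppose the linear functional ⟨·⟩ is reflection positive for reflections through edges and the two-point function G_L is torus symmetric. Then for any i ∈ {1,…,d} and any y ∈ T_L with y·e_i = 0 (possibly y = o), the function n ↦ G_L(o, y + n·e_i) + G_L(o, n·e_i) is non-increasing as n ranges over the odd integers in the interval (0, L/2). -/

import Mathlib

namespace RPPaper

/-- The torus `T_L = (ℤ/Lℤ)^d`. -/
abbrev Torus (d L : ℕ) : Type := Fin d → ZMod L

/-- The unit vector `e i`. -/
def unitVec {d L : ℕ} (i : Fin d) : Torus d L := fun k => if k = i then 1 else 0

/-- The point `a • e i` on the torus. -/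
def axis {d L : ℕ} (i : Fin d) (a : ZMod L) : Torus d L := fun k => if k = i then a else 0

/-- The integer representative of `a : ZMod L` in the interval `(-L/2, L/2]`. -/
def coordRep (L : ℕ) [NeZero L] (a : ZMod L) : ℤ :=
  if (a.val : ℤ) ≤ (L : ℤ) / 2 then (a.val : ℤ) else (a.val : ℤ) - (L : ℤ)

/-- The reflection of the torus in the hyperplane `{z : z·e i = t/2}` (here `t = 2m`);
it is a reflection through edges if `t` is odd, and through vertices if `t` is even. -/
def reflect {d L : ℕ} (i : Fin d) (t : ℕ) (x : Torus d L) : Torus d L :=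
  Function.update x i ((t : ZMod L) - x i)

/-- The positive half `T_L^+` of the torus associated to the reflection in the hyperplane
`{z : z·e i = t/2}`. -/
def posHalf (d L : ℕ) [NeZero L] (i : Fin d) (t : ℕ) : Finset (Torus d L) :=
  if t % 2 = 1 then Finset.univ.filter (fun x => (x i - (((t + 1) / 2 : ℕ) : ZMod L)).val < L / 2)
  else Finset.univ.filter (fun x => (x i - ((t / 2 : ℕ) : ZMod L)).val ≤ L / 2)

/-- The negative half `T_L^- = θ(T_L^+)`. -/
def negHalf (d L : ℕ) [NeZero L] (i : Fin d) (t : ℕ) : Finset (Torus d L) :=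
  (posHalf d L i t).image (reflect i t)

/-- The state space `S = ∏_{x ∈ T_L} Σ_x` (all local state spaces equal to `Sig`). -/
abbrev MState (d L : ℕ) (Sig : Type*) : Type _ := Torus d L → Sig

/-- `A : S → ℝ` has domain `D` if it depends only on the local states in `D`. -/
def HasDomain {d L : ℕ} {Sig : Type*} (A : MState d L Sig → ℝ) (D : Set (Torus d L)) : Prop :=
  ∀ w₁ w₂ : MState d L Sig, (∀ x ∈ D, w₁ x = w₂ x) → A w₁ = A w₂

/-- The action `θA (w) = A (θ w)`, where `(θ w) x = w (θ x)`, of the reflection on functions. -/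
def reflectFun {d L : ℕ} {Sig : Type*} (i : Fin d) (t : ℕ) (A : MState d L Sig → ℝ) :
    MState d L Sig → ℝ := fun w => A (fun x => w (reflect i t x))

/-- `⟨·⟩` is reflection positive with respect to the reflection in the hyperplane
`{z : z·e i = t/2}`: for all `A, B ∈ A_L^+` (members of the algebra with domain `T_L^+`),
`⟨A·θB⟩ = ⟨B·θA⟩` and `⟨A·θA⟩ ≥ 0`. -/
def IsRP {d L : ℕ} {Sig : Type*} [NeZero L] (AL : Subalgebra ℝ (MState d L Sig → ℝ))
    (phi : (MState d L Sig → ℝ) →ₗ[ℝ] ℝ) (i : Fin d) (t : ℕ) : Prop :=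
  ∀ A B : MState d L Sig → ℝ, A ∈ AL → B ∈ AL →
    HasDomain A ↑(posHalf d L i t) → HasDomain B ↑(posHalf d L i t) →
    phi (A * reflectFun i t B) = phi (B * reflectFun i t A) ∧ 0 ≤ phi (A * reflectFun i t A)

/-- Reflection positivity for all reflections through edges. -/
def RPEdges {d L : ℕ} {Sig : Type*} [NeZero L] (AL : Subalgebra ℝ (MState d L Sig → ℝ))
    (phi : (MState d L Sig → ℝ) →ₗ[ℝ] ℝ) : Prop :=
  ∀ (i : Fin d) (t : ℕ), t < 2 * L → t % 2 = 1 → IsRP AL phi i t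

/-- Reflection positivity for all reflections through vertices. -/
def RPVertices {d L : ℕ} {Sig : Type*} [NeZero L] (AL : Subalgebra ℝ (MState d L Sig → ℝ))
    (phi : (MState d L Sig → ℝ) →ₗ[ℝ] ℝ) : Prop :=
  ∀ (i : Fin d) (t : ℕ), t < 2 * L → t % 2 = 0 → IsRP AL phi i t

/-- The single-site function `F^j_x`, obtained from a function `f : Sig → ℝ` of the local
state at the origin by the (path-independent) sequence of reflections sending `o` to `x`. -/
def site {d L : ℕ} {Sig : Type*} (f : Sig → ℝ) (x : Torus d L) : MState d L Sig → ℝ :=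
  fun w => f (w x)

/-- The two-point function `G_L(x,y) = ⟨F²_x F²_y ∏_{z ≠ x,y} F¹_z⟩`. -/
noncomputable def twoPoint {d L : ℕ} {Sig : Type*} [NeZero L]
    (phi : (MState d L Sig → ℝ) →ₗ[ℝ] ℝ) (f1 f2 : Sig → ℝ) (x y : Torus d L) : ℝ :=
  phi (fun w => f2 (w x) * f2 (w y) * ∏ z ∈ (Finset.univ.erase x).erase y, f1 (w z))

/-- Torus symmetry: `⟨∏_{x∈A}F¹_x ∏_{x∈B}F²_x⟩ = ⟨∏_{x∈A+z}F¹_x ∏_{x∈B+z}F²_x⟩`. -/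
def TorusSymmetric {d L : ℕ} {Sig : Type*} [NeZero L]
    (phi : (MState d L Sig → ℝ) →ₗ[ℝ] ℝ) (f1 f2 : Sig → ℝ) : Prop :=
  ∀ (A B : Finset (Torus d L)) (z : Torus d L),
    phi (fun w => (∏ x ∈ A, f1 (w x)) * ∏ x ∈ B, f2 (w x)) =
      phi (fun w => (∏ x ∈ A, f1 (w (x + z))) * ∏ x ∈ B, f2 (w (x + z)))


/-!
Let `θ` be the reflection `x_i ↦ 1 - x_i` through the edge `{o, e_i}` and `T⁺ = {1 ≤ x_i ≤ L/2}`
its positive half. For `u ∈ T⁺` put `A_u = F²_u ∏_{z ∈ T⁺ ∖ {u}} F¹_z`; then `A_u · θA_v` is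
exactly the integrand of `G_L(u, θv)`, so torus symmetry turns `⟨A_u θA_v⟩` into a value of
`G_L(o, ·)`. The symmetry `⟨A θB⟩ = ⟨B θA⟩` shows `G_L(o, -y + c e_i) = G_L(o, y + c e_i)`, hence
`g(c) = G_L(o, y + c e_i) + G_L(o, c e_i)` is even, and for
`P_j = A_{(j+1) e_i} + A_{y + (j+1) e_i}` one gets `⟨P_j θP_{j'}⟩ = 2 g(j + j' + 1)`.
The Cauchy–Schwarz inequality `2⟨P θQ⟩ ≤ ⟨P θP⟩ + ⟨Q θQ⟩` then makes `k ↦ g(2k + 1)` convex on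
`k < L/2`, and evenness of `g` makes it symmetric about the middle of that range; a convex sequence
is non-increasing up to its axis of symmetry.
-/

section Geometry

variable {d L : ℕ}

theorem axis_eq_single (i : Fin d) (a : ZMod L) : axis i a = Pi.single i a := by
  funext k
  simp [axis, Pi.single_apply]

theorem reflect_involutive (i : Fin d) (t : ℕ) :
    Function.Involutive (reflect (d := d) (L := L) i t) := by
  intro x
  funext k
  by_cases hk : k = i
  · subst hk
    simp [reflect]
  · simp [reflect, Function.update_of_ne hk]

theorem reflect_one_add_single {i : Fin d} {y : Torus d L} (hy : y i = 0) (a : ZMod L) :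
    reflect i 1 (y + Pi.single i a) = y + Pi.single i (1 - a) := by
  funext k
  by_cases hk : k = i
  · subst hk
    simp [reflect, hy]
  · simp [reflect, hk]

variable [NeZero L]

theorem val_neg_add_one (a : ZMod L) : (-(a + 1)).val = L - 1 - a.val := by
  obtain ⟨k, hk, rfl⟩ : ∃ k < L, (k : ZMod L) = a :=
    ⟨a.val, ZMod.val_lt a, ZMod.natCast_zmod_val a⟩
  have hcast : ((L - 1 - k : ℕ) : ZMod L) = -(k + 1) := by
    rw [eq_neg_iff_add_eq_zero, ← Nat.cast_add_one, ← Nat.cast_add,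
      show L - 1 - k + (k + 1) = L by omega, ZMod.natCast_self]
  rw [← hcast, ZMod.val_natCast_of_lt hk, ZMod.val_natCast_of_lt (by omega)]

theorem mem_posHalf_one {i : Fin d} {x : Torus d L} :
    x ∈ posHalf d L i 1 ↔ (x i - 1).val < L / 2 := by
  simp [posHalf]

theorem reflect_one_mem_posHalf_one (hL : Even L) {i : Fin d} {x : Torus d L} :
    reflect i 1 x ∈ posHalf d L i 1 ↔ x ∉ posHalf d L i 1 := by
  have : reflect i 1 x i - 1 = -(x i - 1 + 1) := by simp [reflect]
  rw [mem_posHalf_one, mem_posHalf_one, this, val_neg_add_one]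
  have := ZMod.val_lt (x i - 1)
  obtain ⟨M, rfl⟩ := hL
  omega

theorem exists_eq_neg_natCast_of_ne_zero (hL : Even L) {c : ZMod L} (hc : c ≠ 0) :
    ∃ j j' : ℕ, j < L / 2 ∧ j' < L / 2 ∧ c = -((j + j' + 1 : ℕ) : ZMod L) := by
  have hpos : 0 < (-c).val := by simpa [ZMod.val_pos] using hc
  have hlt := ZMod.val_lt (-c)
  set k := (-c).val with hk
  obtain ⟨M, rfl⟩ := hL
  refine ⟨min (k - 1) (M - 1), k - 1 - min (k - 1) (M - 1), by omega, by omega, ?_⟩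
  rw [show min (k - 1) (M - 1) + (k - 1 - min (k - 1) (M - 1)) + 1 = k by omega, hk,
    ZMod.natCast_zmod_val, neg_neg]

end Geometry

theorem antitoneOn_Iic_half_of_convex_of_symm {h : ℕ → ℝ} {N : ℕ}
    (hconv : ∀ k, k + 2 ≤ N → 2 * h (k + 1) ≤ h k + h (k + 2))
    (hsymm : ∀ k ≤ N, h (N - k) = h k) : AntitoneOn h (Set.Iic (N / 2)) := by
  set Δ : ℕ → ℝ := fun k => h (k + 1) - h k
  have hΔ : MonotoneOn Δ (Set.Iio N) := by
    refine monotoneOn_of_le_succ Set.ordConnected_Iio fun k _ _ hk => ?_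
    rw [Order.succ_eq_add_one] at hk ⊢
    have := hconv k (by simp at hk; omega)
    simp only [Δ]
    linarith
  refine antitoneOn_of_succ_le Set.ordConnected_Iic fun k _ _ hk => ?_
  rw [Order.succ_eq_add_one] at hk ⊢
  have hk : 2 * (k + 1) ≤ N := by simp at hk; omega
  have hle : Δ k ≤ Δ (N - 1 - k) := hΔ (by simp; omega) (by simp; omega) (by omega)
  have hrefl : Δ (N - 1 - k) = h k - h (k + 1) := by
    simp only [Δ]
    rw [show N - 1 - k + 1 = N - k by omega, show N - 1 - k = N - (k + 1) by omega,
      hsymm k (by omega), hsymm (k + 1) (by omega)]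
  simp only [Δ] at hle hrefl
  linarith

section TwoPoint

variable {d L : ℕ} [NeZero L] {Sig : Type*} {phi : (MState d L Sig → ℝ) →ₗ[ℝ] ℝ}
  {f1 f2 : Sig → ℝ}

theorem twoPoint_comm (x z : Torus d L) :
    twoPoint phi f1 f2 x z = twoPoint phi f1 f2 z x := by
  unfold twoPoint
  congr 1
  funext w
  rw [Finset.erase_right_comm]
  ring

theorem twoPoint_eq_phi_prod {x z : Torus d L} (hxz : x ≠ z) :
    twoPoint phi f1 f2 x z =
      phi (fun w => (∏ a ∈ (Finset.univ.erase x).erase z, f1 (w a)) *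
        ∏ a ∈ {x, z}, f2 (w a)) := by
  unfold twoPoint
  congr 1
  funext w
  rw [Finset.prod_pair hxz]
  ring

theorem TorusSymmetric.twoPoint_add (hsym : TorusSymmetric phi f1 f2) {x z : Torus d L}
    (hxz : x ≠ z) (v : Torus d L) :
    twoPoint phi f1 f2 (x + v) (z + v) = twoPoint phi f1 f2 x z := by
  rw [twoPoint_eq_phi_prod hxz, hsym _ _ v, twoPoint_eq_phi_prod (by simpa using hxz)]
  congr 1
  funext w
  congr 1
  · exact (Finset.prod_equiv (Equiv.addRight v) (by simp) (by simp)).symm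
  · rw [Finset.prod_pair hxz, Finset.prod_pair (by simpa using hxz)]

theorem TorusSymmetric.twoPoint_eq_zero_sub (hsym : TorusSymmetric phi f1 f2)
    {x z : Torus d L} (hxz : x ≠ z) :
    twoPoint phi f1 f2 x z = twoPoint phi f1 f2 0 (z - x) := by
  rw [← hsym.twoPoint_add hxz (-x), add_neg_cancel, sub_eq_add_neg]

theorem TorusSymmetric.twoPoint_zero_neg (hsym : TorusSymmetric phi f1 f2) (z : Torus d L) :
    twoPoint phi f1 f2 0 (-z) = twoPoint phi f1 f2 0 z := by
  rcases eq_or_ne z 0 with rfl | hz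
  · rw [neg_zero]
  · rw [twoPoint_comm, hsym.twoPoint_eq_zero_sub (neg_ne_zero.mpr hz), zero_sub, neg_neg]

end TwoPoint

section ReflectionPositivity

variable {d L : ℕ} {Sig : Type*}

theorem HasDomain.sub {A B : MState d L Sig → ℝ} {D : Set (Torus d L)}
    (hA : HasDomain A D) (hB : HasDomain B D) : HasDomain (A - B) D := fun w₁ w₂ h => by
  simp only [Pi.sub_apply, hA w₁ w₂ h, hB w₁ w₂ h]

theorem HasDomain.add {A B : MState d L Sig → ℝ} {D : Set (Torus d L)}
    (hA : HasDomain A D) (hB : HasDomain B D) : HasDomain (A + B) D := fun w₁ w₂ h => by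
  simp only [Pi.add_apply, hA w₁ w₂ h, hB w₁ w₂ h]

theorem reflectFun_add (i : Fin d) (t : ℕ) (A B : MState d L Sig → ℝ) :
    reflectFun i t (A + B) = reflectFun i t A + reflectFun i t B := rfl

theorem reflectFun_sub (i : Fin d) (t : ℕ) (A B : MState d L Sig → ℝ) :
    reflectFun i t (A - B) = reflectFun i t A - reflectFun i t B := rfl

theorem IsRP.two_mul_le [NeZero L] {AL : Subalgebra ℝ (MState d L Sig → ℝ)}
    {phi : (MState d L Sig → ℝ) →ₗ[ℝ] ℝ} {i : Fin d} {t : ℕ} (hRP : IsRP AL phi i t)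
    {A B : MState d L Sig → ℝ} (hA : A ∈ AL) (hB : B ∈ AL)
    (hAD : HasDomain A ↑(posHalf d L i t)) (hBD : HasDomain B ↑(posHalf d L i t)) :
    2 * phi (A * reflectFun i t B) ≤ phi (A * reflectFun i t A) + phi (B * reflectFun i t B) := by
  have hpos := (hRP (A - B) (A - B) (sub_mem hA hB) (sub_mem hA hB) (hAD.sub hBD)
    (hAD.sub hBD)).2
  have hswap := (hRP A B hA hB hAD hBD).1
  have hexpand : (A - B) * reflectFun i t (A - B) =
      A * reflectFun i t A - A * reflectFun i t B - B * reflectFun i t A +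
        B * reflectFun i t B := by
    rw [reflectFun_sub]
    ring
  rw [hexpand, map_add, map_sub, map_sub, hswap] at hpos
  linarith

end ReflectionPositivity

section HalfBlock

variable {d L : ℕ} [NeZero L] {Sig : Type*} (f1 f2 : Sig → ℝ) (i : Fin d)

noncomputable def halfBlock (u : Torus d L) : MState d L Sig → ℝ :=
  fun w => f2 (w u) * ∏ z ∈ (posHalf d L i 1).erase u, f1 (w z)

variable {f1 f2 i}

theorem halfBlock_mem {AL : Subalgebra ℝ (MState d L Sig → ℝ)}
    (hF1 : ∀ x : Torus d L, site f1 x ∈ AL) (hF2 : ∀ x : Torus d L, site f2 x ∈ AL)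
    (u : Torus d L) : halfBlock f1 f2 i u ∈ AL := by
  have h : halfBlock f1 f2 i u = site f2 u * ∏ z ∈ (posHalf d L i 1).erase u, site f1 z := by
    funext w
    simp [halfBlock, site, Finset.prod_apply]
  rw [h]
  exact mul_mem (hF2 u) (prod_mem fun z _ => hF1 z)

theorem hasDomain_halfBlock {u : Torus d L} (hu : u ∈ posHalf d L i 1) :
    HasDomain (halfBlock f1 f2 i u) ↑(posHalf d L i 1) := by
  intro w₁ w₂ h
  simp only [halfBlock, h u hu]
  congr 1
  exact Finset.prod_congr rfl fun z hz => by rw [h z (Finset.mem_of_mem_erase hz)]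

theorem phi_halfBlock_mul_reflectFun (phi : (MState d L Sig → ℝ) →ₗ[ℝ] ℝ) (hL : Even L)
    {u v : Torus d L} (hu : u ∈ posHalf d L i 1) (hv : v ∈ posHalf d L i 1) :
    phi (halfBlock f1 f2 i u * reflectFun i 1 (halfBlock f1 f2 i v)) =
      twoPoint phi f1 f2 u (reflect i 1 v) := by
  have hθv : reflect i 1 v ∉ posHalf d L i 1 := by
    rw [reflect_one_mem_posHalf_one hL]; exact not_not.mpr hv
  unfold twoPoint
  congr 1
  funext w
  rw [← Finset.prod_filter_mul_prod_filter_not _ (· ∈ posHalf d L i 1)]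
  have hplus : ((Finset.univ.erase u).erase (reflect i 1 v)).filter (· ∈ posHalf d L i 1) =
      (posHalf d L i 1).erase u := by
    ext z
    simp only [Finset.mem_filter, Finset.mem_erase, Finset.mem_univ]
    constructor
    · rintro ⟨⟨-, hzu, -⟩, hz⟩; exact ⟨hzu, hz⟩
    · rintro ⟨hzu, hz⟩; exact ⟨⟨fun h => hθv (h ▸ hz), hzu, trivial⟩, hz⟩
  have hminus : ∏ z ∈ ((Finset.univ.erase u).erase (reflect i 1 v)).filter
      (· ∉ posHalf d L i 1), f1 (w z) =
      ∏ z ∈ (posHalf d L i 1).erase v, f1 (w (reflect i 1 z)) := by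
    refine Finset.prod_equiv ((reflect_involutive i 1).toPerm _) (fun z => ?_)
      fun z _ => by simp [reflect_involutive i 1 z]
    simp only [Finset.mem_filter, Finset.mem_erase, Finset.mem_univ,
      Function.Involutive.coe_toPerm, reflect_one_mem_posHalf_one hL, ne_eq,
      (reflect_involutive i 1).eq_iff, and_true]
    exact ⟨fun h => ⟨h.1.1, h.2⟩, fun h => ⟨⟨h.1, fun e => h.2 (e ▸ hu)⟩, h.2⟩⟩
  rw [hplus, hminus]
  simp only [halfBlock, reflectFun, Pi.mul_apply]
  ring

end HalfBlock

section EdgeReflection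

variable {d L : ℕ} [NeZero L] {Sig : Type*} {AL : Subalgebra ℝ (MState d L Sig → ℝ)}
  {phi : (MState d L Sig → ℝ) →ₗ[ℝ] ℝ} {f1 f2 : Sig → ℝ} {i : Fin d} {y : Torus d L}

theorem add_single_mem_posHalf_one (hy : y i = 0) {j : ℕ} (hj : j < L / 2) :
    y + Pi.single i ((j : ZMod L) + 1) ∈ posHalf d L i 1 := by
  rw [mem_posHalf_one]
  simpa [hy, ZMod.val_natCast_of_lt (hj.trans_le (Nat.div_le_self L 2))] using hj

theorem phi_halfBlock_add_single_mul_reflectFun (hL : Even L)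
    (hsym : TorusSymmetric phi f1 f2) {y₁ y₂ : Torus d L} (hy₁ : y₁ i = 0) (hy₂ : y₂ i = 0)
    {j j' : ℕ} (hj : j < L / 2) (hj' : j' < L / 2) :
    phi (halfBlock f1 f2 i (y₁ + Pi.single i ((j : ZMod L) + 1)) *
        reflectFun i 1 (halfBlock f1 f2 i (y₂ + Pi.single i ((j' : ZMod L) + 1)))) =
      twoPoint phi f1 f2 0 (y₂ - y₁ + Pi.single i (-((j + j' + 1 : ℕ) : ZMod L))) := by
  have hu := add_single_mem_posHalf_one hy₁ hj
  have hv := add_single_mem_posHalf_one hy₂ hj'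
  have hne : y₁ + Pi.single i ((j : ZMod L) + 1) ≠
      reflect i 1 (y₂ + Pi.single i ((j' : ZMod L) + 1)) :=
    fun h => (reflect_one_mem_posHalf_one hL).mp (h ▸ hu) hv
  rw [phi_halfBlock_mul_reflectFun phi hL hu hv, hsym.twoPoint_eq_zero_sub hne,
    reflect_one_add_single hy₂]
  congr 1
  rw [show (1 : ZMod L) - (j' + 1) = (j + 1) + -((j + j' + 1 : ℕ) : ZMod L) by push_cast; ring,
    Pi.single_add]
  abel

theorem twoPoint_neg_add_single (hL : Even L) (hy : y i = 0)
    (hF1 : ∀ x : Torus d L, site f1 x ∈ AL) (hF2 : ∀ x : Torus d L, site f2 x ∈ AL)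
    (hRP : IsRP AL phi i 1) (hsym : TorusSymmetric phi f1 f2) (c : ZMod L) :
    twoPoint phi f1 f2 0 (-y + Pi.single i c) = twoPoint phi f1 f2 0 (y + Pi.single i c) := by
  rcases eq_or_ne c 0 with rfl | hc
  · simpa using hsym.twoPoint_zero_neg y
  obtain ⟨j, j', hj, hj', rfl⟩ := exists_eq_neg_natCast_of_ne_zero hL hc
  have hswap := (hRP _ _ (halfBlock_mem hF1 hF2 _) (halfBlock_mem hF1 hF2 _)
    (hasDomain_halfBlock (add_single_mem_posHalf_one hy hj))
    (hasDomain_halfBlock (add_single_mem_posHalf_one (y := 0) rfl hj'))).1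
  rw [phi_halfBlock_add_single_mul_reflectFun hL hsym hy rfl hj hj',
    phi_halfBlock_add_single_mul_reflectFun hL hsym rfl hy hj' hj] at hswap
  simpa [add_comm j' j] using hswap

noncomputable def twoPointPair (phi : (MState d L Sig → ℝ) →ₗ[ℝ] ℝ) (f1 f2 : Sig → ℝ)
    (i : Fin d) (y : Torus d L) (c : ZMod L) : ℝ :=
  twoPoint phi f1 f2 0 (y + Pi.single i c) + twoPoint phi f1 f2 0 (Pi.single i c)

theorem twoPointPair_neg (hL : Even L) (hy : y i = 0)
    (hF1 : ∀ x : Torus d L, site f1 x ∈ AL) (hF2 : ∀ x : Torus d L, site f2 x ∈ AL)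
    (hRP : IsRP AL phi i 1) (hsym : TorusSymmetric phi f1 f2) (c : ZMod L) :
    twoPointPair phi f1 f2 i y (-c) = twoPointPair phi f1 f2 i y c := by
  have hy' : y + Pi.single i (-c) = -(-y + Pi.single i c) := by rw [Pi.single_neg]; abel
  rw [twoPointPair, twoPointPair, hy', hsym.twoPoint_zero_neg,
    twoPoint_neg_add_single hL hy hF1 hF2 hRP hsym, Pi.single_neg, hsym.twoPoint_zero_neg]

theorem two_mul_twoPointPair_le (hL : Even L) (hy : y i = 0)
    (hF1 : ∀ x : Torus d L, site f1 x ∈ AL) (hF2 : ∀ x : Torus d L, site f2 x ∈ AL)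
    (hRP : IsRP AL phi i 1) (hsym : TorusSymmetric phi f1 f2)
    {j j' : ℕ} (hj : j < L / 2) (hj' : j' < L / 2) :
    2 * twoPointPair phi f1 f2 i y (j + j' + 1 : ℕ) ≤
      twoPointPair phi f1 f2 i y (2 * j + 1 : ℕ) + twoPointPair phi f1 f2 i y (2 * j' + 1 : ℕ) := by
  -- `0 +` keeps both summands in the shape of `phi_halfBlock_add_single_mul_reflectFun`.
  set P : ℕ → MState d L Sig → ℝ := fun k =>
    halfBlock f1 f2 i (0 + Pi.single i ((k : ZMod L) + 1)) +
      halfBlock f1 f2 i (y + Pi.single i ((k : ZMod L) + 1))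
  have hmem (k : ℕ) : P k ∈ AL := add_mem (halfBlock_mem hF1 hF2 _) (halfBlock_mem hF1 hF2 _)
  have hdom {k : ℕ} (hk : k < L / 2) : HasDomain (P k) ↑(posHalf d L i 1) :=
    (hasDomain_halfBlock (add_single_mem_posHalf_one rfl hk)).add
      (hasDomain_halfBlock (add_single_mem_posHalf_one hy hk))
  have hcross {k k' : ℕ} (hk : k < L / 2) (hk' : k' < L / 2) :
      phi (P k * reflectFun i 1 (P k')) = 2 * twoPointPair phi f1 f2 i y (k + k' + 1 : ℕ) := by
    simp only [P, reflectFun_add, add_mul, mul_add, map_add]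
    rw [phi_halfBlock_add_single_mul_reflectFun hL hsym rfl rfl hk hk',
      phi_halfBlock_add_single_mul_reflectFun hL hsym rfl hy hk hk',
      phi_halfBlock_add_single_mul_reflectFun hL hsym hy rfl hk hk',
      phi_halfBlock_add_single_mul_reflectFun hL hsym hy hy hk hk',
      ← twoPointPair_neg hL hy hF1 hF2 hRP hsym]
    simp only [sub_self, sub_zero, zero_sub, zero_add,
      twoPoint_neg_add_single hL hy hF1 hF2 hRP hsym, twoPointPair]
    ring
  have h := hRP.two_mul_le (hmem j) (hmem j') (hdom hj) (hdom hj')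
  rw [hcross hj hj', hcross hj hj, hcross hj' hj', ← two_mul, ← two_mul] at h
  linarith

end EdgeReflection

theorem statement2_general {d L : ℕ} [NeZero L] (hL : Even L) {Sig : Type*}
    (AL : Subalgebra ℝ (MState d L Sig → ℝ))
    (phi : (MState d L Sig → ℝ) →ₗ[ℝ] ℝ)
    (f1 f2 : Sig → ℝ)
    (hF1 : ∀ x : Torus d L, site f1 x ∈ AL) (hF2 : ∀ x : Torus d L, site f2 x ∈ AL)
    (hRP : RPEdges AL phi) (hsym : TorusSymmetric phi f1 f2)
    (i : Fin d) (y : Torus d L) (hy : y i = 0)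
    (m n : ℕ) (hm : Odd m) (hn : Odd n) (hmn : m ≤ n) (hnL : 2 * n < L) :
    twoPoint phi f1 f2 0 (y + axis i (n : ZMod L)) + twoPoint phi f1 f2 0 (axis i (n : ZMod L)) ≤
      twoPoint phi f1 f2 0 (y + axis i (m : ZMod L)) + twoPoint phi f1 f2 0 (axis i (m : ZMod L)) := by
  have hRP₁ : IsRP AL phi i 1 := hRP i 1 (by have := NeZero.pos L; omega) rfl
  have hL₂ := Nat.two_mul_div_two_of_even hL
  have hconvex (k : ℕ) (hk : k + 2 ≤ L / 2 - 1) :=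
    two_mul_twoPointPair_le hL hy hF1 hF2 hRP₁ hsym (j := k) (j' := k + 2) (by omega) (by omega)
  have hsymm (k : ℕ) (hk : k ≤ L / 2 - 1) :
      ((2 * (L / 2 - 1 - k) + 1 : ℕ) : ZMod L) = -((2 * k + 1 : ℕ) : ZMod L) := by
    have := NeZero.pos L
    rw [eq_neg_iff_add_eq_zero, ← Nat.cast_add,
      show 2 * (L / 2 - 1 - k) + 1 + (2 * k + 1) = L by omega, ZMod.natCast_self]
  have hanti := antitoneOn_Iic_half_of_convex_of_symm
    (h := fun k => twoPointPair phi f1 f2 i y (2 * k + 1 : ℕ)) (N := L / 2 - 1)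
    (fun k hk => by simpa [show k + (k + 2) + 1 = 2 * (k + 1) + 1 by ring] using hconvex k hk)
    (fun k hk => by simp only [hsymm k hk, twoPointPair_neg hL hy hF1 hF2 hRP₁ hsym])
  obtain ⟨a, rfl⟩ := hm
  obtain ⟨b, rfl⟩ := hn
  simpa only [axis_eq_single, twoPointPair] using
    hanti (a := a) (b := b) (by simp; omega) (by simp; omega) (by omega)

/-- If `⟨·⟩` is reflection positive for reflections through edges and the two-point function
is torus symmetric, then for `y·e i = 0` the function
`n ↦ G_L(o, y + n e i) + G_L(o, n e i)` is non-increasing in odd `n ∈ (0, L/2)`. -/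
theorem statement2 {d L : ℕ} [NeZero L] (hd : 2 ≤ d) (hL : Even L) {Sig : Type*}
    (AL : Subalgebra ℝ (MState d L Sig → ℝ)) (hfin : FiniteDimensional ℝ AL)
    (phi : (MState d L Sig → ℝ) →ₗ[ℝ] ℝ) (hone : phi 1 = 1)
    (f1 f2 : Sig → ℝ)
    (hF1 : ∀ x : Torus d L, site f1 x ∈ AL) (hF2 : ∀ x : Torus d L, site f2 x ∈ AL)
    (hRP : RPEdges AL phi) (hsym : TorusSymmetric phi f1 f2)
    (i : Fin d) (y : Torus d L) (hy : y i = 0)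
    (m n : ℕ) (hm : Odd m) (hn : Odd n) (hmn : m ≤ n) (hnL : 2 * n < L) :
    twoPoint phi f1 f2 0 (y + axis i (n : ZMod L)) + twoPoint phi f1 f2 0 (axis i (n : ZMod L)) ≤
      twoPoint phi f1 f2 0 (y + axis i (m : ZMod L)) + twoPoint phi f1 f2 0 (axis i (m : ZMod L)) :=
  statement2_general hL AL phi f1 f2 hF1 hF2 hRP hsym i y hy m n hm hn hmn hnL

end RPPaper
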